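/- arXiv:1110.0285 — 8 statements merged into one kernel-verified Lean document; each statement's English description precedes it below -/
import Mathlib

section
/- If σ ≠ 0 satisfies 2σ²(σ/α + λ) = |f|² and x = f/σ, then Π(x) = Π^d(σ), i.e., the primal and dual functions agree at corresponding critical points; in fact both equal −3σ²/(2α) − 2σλ. -/
/-! At a root `σ` of the dual equation, `‖x‖²/2 - λ = σ/α` for `x = f/σ`, so the primal value
collapses to `σ²/(2α) - ‖f‖²/σ` while `‖f‖²/σ = 2σ²/α + 2σλ`; substituting the same identity into
`Π^d` gives the common value `-3σ²/(2α) - 2σλ`. -/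

open RealInnerProductSpace

theorem primal_inv_smul {E : Type*} [NormedAddCommGroup E] [InnerProductSpace ℝ E]
    (α lam σ : ℝ) (f : E) :
    α / 2 * (‖σ⁻¹ • f‖ ^ 2 / 2 - lam) ^ 2 - ⟪σ⁻¹ • f, f⟫
      = α / 2 * (‖f‖ ^ 2 / (2 * σ ^ 2) - lam) ^ 2 - ‖f‖ ^ 2 / σ := by
  rw [norm_smul, real_inner_smul_left, real_inner_self_eq_norm_sq, norm_inv, Real.norm_eq_abs,
    mul_pow, inv_pow, sq_abs]
  ring

section CriticalValue

variable {α lam σ r : ℝ}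

theorem dual_eq_of_root (hσ : σ ≠ 0) (hroot : 2 * σ ^ 2 * (σ / α + lam) = r) :
    -r / (2 * σ) - σ ^ 2 / (2 * α) - σ * lam = -3 * σ ^ 2 / (2 * α) - 2 * σ * lam := by
  subst hroot
  field_simp
  ring

theorem primal_eq_of_root (hσ : σ ≠ 0) (hroot : 2 * σ ^ 2 * (σ / α + lam) = r) :
    α / 2 * (r / (2 * σ ^ 2) - lam) ^ 2 - r / σ = -3 * σ ^ 2 / (2 * α) - 2 * σ * lam := by
  subst hroot
  -- holds also for `α = 0`, since `0⁻¹ = 0`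
  have hα : α * α⁻¹ * α⁻¹ = α⁻¹ := by simpa using inv_mul_mul_self α⁻¹
  rw [mul_div_cancel_left₀ _ (by positivity)]
  field_simp
  linear_combination σ ^ 2 * hα

end CriticalValue

theorem stmt_2_general (n : ℕ) (α lam : ℝ)
    (f : EuclideanSpace ℝ (Fin n))
    (σ : ℝ) (hσ : σ ≠ 0) (hroot : 2 * σ ^ 2 * (σ / α + lam) = ‖f‖ ^ 2) :
    α / 2 * (‖σ⁻¹ • f‖ ^ 2 / 2 - lam) ^ 2 - ⟪σ⁻¹ • f, f⟫
      = -‖f‖ ^ 2 / (2 * σ) - σ ^ 2 / (2 * α) - σ * lam ∧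
    -‖f‖ ^ 2 / (2 * σ) - σ ^ 2 / (2 * α) - σ * lam
      = -3 * σ ^ 2 / (2 * α) - 2 * σ * lam := by
  have hdual := dual_eq_of_root hσ hroot
  rw [primal_inv_smul, primal_eq_of_root hσ hroot, hdual]
  exact ⟨rfl, rfl⟩

/-- If `σ ≠ 0` satisfies `2σ²(σ/α + λ) = ‖f‖²` and `x = f/σ`, then
`Π(x) = Π^d(σ) = −3σ²/(2α) − 2σλ`. -/
theorem stmt_2 (n : ℕ) (α lam : ℝ) (hα : 0 < α) (hlam : 0 < lam)
    (f : EuclideanSpace ℝ (Fin n)) (hf : f ≠ 0)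
    (σ : ℝ) (hσ : σ ≠ 0) (hroot : 2 * σ ^ 2 * (σ / α + lam) = ‖f‖ ^ 2) :
    α / 2 * (‖σ⁻¹ • f‖ ^ 2 / 2 - lam) ^ 2 - ⟪σ⁻¹ • f, f⟫
      = -‖f‖ ^ 2 / (2 * σ) - σ ^ 2 / (2 * α) - σ * lam ∧
    -‖f‖ ^ 2 / (2 * σ) - σ ^ 2 / (2 * α) - σ * lam
      = -3 * σ ^ 2 / (2 * α) - 2 * σ * lam :=
  stmt_2_general n α lam f σ hσ hroot
end

section
/- If 0 < |f|² < 8α²λ³/27, then the cubic 2σ²(σ/α + λ) = |f|² has exactly three distinct real roots σ₁, σ₂, σ₃ satisfying σ₁ > 0 > σ₂ > −2αλ/3 > σ₃ > −αλ. -/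
/-!
The function `g σ = 2σ²(σ/α + λ)` vanishes at `-αλ` and (doubly) at `0`, has the local maximum
`8α²λ³/27` at `-2αλ/3` and exceeds `‖f‖²` at `αλ`, so the intermediate value theorem gives a root
in each of `(-αλ, -2αλ/3)`, `(-2αλ/3, 0)` and `(0, αλ)`. A monic cubic has no fourth root:
two triples of distinct roots sharing two members have the same sum `-s`.
-/

section Cubic

variable {R : Type*} [CommRing R] [IsDomain R] {s t u a b c x : R}

theorem cubic_roots_sum_eq_neg (ha : a ^ 3 + s * a ^ 2 + t * a + u = 0)
    (hb : b ^ 3 + s * b ^ 2 + t * b + u = 0) (hc : c ^ 3 + s * c ^ 2 + t * c + u = 0)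
    (hab : a ≠ b) (hac : a ≠ c) (hbc : b ≠ c) : a + b + c = -s := by
  have h : (a - b) * (a - c) * (b - c) * (a + b + c + s) = 0 := by
    linear_combination (b - c) * ha - (a - c) * hb + (a - b) * hc
  simpa [sub_eq_zero, hab, hac, hbc, add_eq_zero_iff_eq_neg] using h

theorem eq_or_eq_or_eq_of_cubic (hx : x ^ 3 + s * x ^ 2 + t * x + u = 0)
    (ha : a ^ 3 + s * a ^ 2 + t * a + u = 0) (hb : b ^ 3 + s * b ^ 2 + t * b + u = 0)
    (hc : c ^ 3 + s * c ^ 2 + t * c + u = 0) (hab : a ≠ b) (hac : a ≠ c) (hbc : b ≠ c) :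
    x = a ∨ x = b ∨ x = c := by
  by_contra! hne
  have hx_sum := cubic_roots_sum_eq_neg hx hb hc hne.2.1 hne.2.2 hbc
  have ha_sum := cubic_roots_sum_eq_neg ha hb hc hab hac hbc
  exact hne.1 (by linear_combination hx_sum - ha_sum)

end Cubic

section Profile

variable {α lam : ℝ}

theorem profile_mul_scale (hα : α ≠ 0) (τ : ℝ) :
    2 * (τ * (α * lam)) ^ 2 * (τ * (α * lam) / α + lam) = 2 * α ^ 2 * lam ^ 3 * τ ^ 2 * (τ + 1) := by
  field_simp

theorem cubic_eq_zero_of_profile_eq {c σ : ℝ} (hα : α ≠ 0) (h : 2 * σ ^ 2 * (σ / α + lam) = c) :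
    σ ^ 3 + α * lam * σ ^ 2 + 0 * σ + -(α * c / 2) = 0 := by
  field_simp at h; linear_combination h / 2

end Profile

/-- If `0 < ‖f‖² < 8α²λ³/27`, the cubic `2σ²(σ/α + λ) = ‖f‖²` has exactly
three distinct real roots `σ₁ > 0 > σ₂ > −2αλ/3 > σ₃ > −αλ`. -/
theorem stmt_6 (n : ℕ) (α lam : ℝ) (hα : 0 < α) (hlam : 0 < lam)
    (f : EuclideanSpace ℝ (Fin n))
    (hf : 0 < ‖f‖ ^ 2) (hf' : ‖f‖ ^ 2 < 8 * α ^ 2 * lam ^ 3 / 27) :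
    ∃ σ₁ σ₂ σ₃ : ℝ,
      σ₁ > 0 ∧ 0 > σ₂ ∧ σ₂ > -2 * α * lam / 3 ∧ -2 * α * lam / 3 > σ₃ ∧
      σ₃ > -α * lam ∧
      2 * σ₁ ^ 2 * (σ₁ / α + lam) = ‖f‖ ^ 2 ∧
      2 * σ₂ ^ 2 * (σ₂ / α + lam) = ‖f‖ ^ 2 ∧
      2 * σ₃ ^ 2 * (σ₃ / α + lam) = ‖f‖ ^ 2 ∧
      ∀ σ : ℝ, 2 * σ ^ 2 * (σ / α + lam) = ‖f‖ ^ 2 →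
        σ = σ₁ ∨ σ = σ₂ ∨ σ = σ₃ := by
  set g : ℝ → ℝ := fun σ => 2 * σ ^ 2 * (σ / α + lam)
  have hg : Continuous g := by fun_prop
  have g_scale := profile_mul_scale (lam := lam) hα.ne'
  have g_neg_one : g (-1 * (α * lam)) = 0 := by simp only [g, g_scale]; ring
  have g_zero : g (0 * (α * lam)) = 0 := by simp only [g, g_scale]; ring
  have g_max : g (-2 / 3 * (α * lam)) = 8 * α ^ 2 * lam ^ 3 / 27 := by simp only [g, g_scale]; ring
  have g_one : g (1 * (α * lam)) = 4 * α ^ 2 * lam ^ 3 := by simp only [g, g_scale]; ring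
  have hαl : 0 < α * lam := mul_pos hα hlam
  obtain ⟨σ₁, ⟨h₁l, h₁u⟩, hσ₁⟩ := intermediate_value_Ioo (by nlinarith) hg.continuousOn
    (show ‖f‖ ^ 2 ∈ Set.Ioo (g (0 * (α * lam))) (g (1 * (α * lam))) by
      rw [g_zero, g_one]; exact ⟨hf, by nlinarith⟩)
  obtain ⟨σ₂, ⟨h₂l, h₂u⟩, hσ₂⟩ := intermediate_value_Ioo' (by nlinarith) hg.continuousOn
    (show ‖f‖ ^ 2 ∈ Set.Ioo (g (0 * (α * lam))) (g (-2 / 3 * (α * lam))) by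
      rw [g_zero, g_max]; exact ⟨hf, hf'⟩)
  obtain ⟨σ₃, ⟨h₃l, h₃u⟩, hσ₃⟩ := intermediate_value_Ioo (by nlinarith) hg.continuousOn
    (show ‖f‖ ^ 2 ∈ Set.Ioo (g (-1 * (α * lam))) (g (-2 / 3 * (α * lam))) by
      rw [g_neg_one, g_max]; exact ⟨hf, hf'⟩)
  have hroot (σ : ℝ) := cubic_eq_zero_of_profile_eq (σ := σ) (c := ‖f‖ ^ 2) (lam := lam) hα.ne'
  refine ⟨σ₁, σ₂, σ₃, by linarith, by linarith, by linarith, by linarith, by linarith,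
    hσ₁, hσ₂, hσ₃, fun σ hσ => ?_⟩
  exact eq_or_eq_or_eq_of_cubic (hroot σ hσ) (hroot σ₁ hσ₁) (hroot σ₂ hσ₂) (hroot σ₃ hσ₃)
    (by intro h; linarith) (by intro h; linarith) (by intro h; linarith)
end

section
/- For 0 < |f|² < 8α²λ³/27, the numbers σ_k = (αλ/3)(2cos((1/3)arccos(27|f|²/(4α²λ³) − 1) + θ_k) − 1) for θ_k ∈ {0, 4π/3, 2π/3} are exactly the three real roots of the cubic 2σ²(σ/α + λ) = |f|². -/
/-!
Cardano–Viète: the substitution `σ = (αλ/3)(2y − 1)` turns `2σ²(σ/α + λ) = F` into the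
Chebyshev cubic `4y³ − 3y = c` with `c = 27F/(4α²λ³) − 1`. When `|c| ≤ 1`, write `c = cos 3x`
with `x = arccos c / 3`; the triplication formula shows that `cos x`, `cos (x + 2π/3)` and
`cos (x + 4π/3)` are roots, and they are all of them, since `4y³ − 3y − cos 3x` factors as
`4 (y − cos x)(y − cos (x + 4π/3))(y − cos (x + 2π/3))` for every `x`.
-/

open Real

lemma cos_add_four_pi_div_three (x : ℝ) :
    cos (x + 4 * π / 3) = -cos x / 2 + √3 / 2 * sin x := by
  have hc : cos (4 * π / 3) = -(1 / 2) := by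
    rw [show 4 * π / 3 = π / 3 + π by ring, cos_add_pi, cos_pi_div_three]
  have hs : sin (4 * π / 3) = -(√3 / 2) := by
    rw [show 4 * π / 3 = π / 3 + π by ring, sin_add_pi, sin_pi_div_three]
  rw [cos_add, hc, hs]
  ring

lemma cos_add_two_pi_div_three (x : ℝ) :
    cos (x + 2 * π / 3) = -cos x / 2 - √3 / 2 * sin x := by
  have hc : cos (2 * π / 3) = -(1 / 2) := by
    rw [show 2 * π / 3 = π - π / 3 by ring, cos_pi_sub, cos_pi_div_three]
  have hs : sin (2 * π / 3) = √3 / 2 := by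
    rw [show 2 * π / 3 = π - π / 3 by ring, sin_pi_sub, sin_pi_div_three]
  rw [cos_add, hc, hs]
  ring

lemma four_mul_cube_sub_three_mul_sub_cos_three_mul (x y : ℝ) :
    4 * y ^ 3 - 3 * y - cos (3 * x) =
      4 * (y - cos x) * (y - cos (x + 4 * π / 3)) * (y - cos (x + 2 * π / 3)) := by
  have hsin : sin x ^ 2 = 1 - cos x ^ 2 := by linarith [sin_sq_add_cos_sq x]
  have hsqrt : √3 ^ 2 = 3 := sq_sqrt (by norm_num)
  rw [cos_three_mul, cos_add_four_pi_div_three, cos_add_two_pi_div_three]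
  linear_combination (3 * y - 3 * cos x) * hsin + (y - cos x) * sin x ^ 2 * hsqrt

lemma setOf_four_mul_cube_sub_three_mul_eq {x c : ℝ} (hc : cos (3 * x) = c) :
    {y : ℝ | 4 * y ^ 3 - 3 * y = c} =
      (fun θ => cos (x + θ)) '' {0, 4 * π / 3, 2 * π / 3} := by
  ext y
  simp only [Set.mem_ofPred_eq, Set.image_insert_eq, Set.image_singleton, add_zero,
    Set.mem_insert_iff, Set.mem_singleton_iff, ← hc, ← sub_eq_zero (a := 4 * y ^ 3 - 3 * y),
    four_mul_cube_sub_three_mul_sub_cos_three_mul, mul_eq_zero, sub_eq_zero]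
  norm_num [or_assoc]

lemma setOf_two_mul_sq_mul_div_add_eq {α lam : ℝ} (hα : α ≠ 0) (hlam : lam ≠ 0) (F : ℝ) :
    {σ : ℝ | 2 * σ ^ 2 * (σ / α + lam) = F} =
      (fun y => α * lam / 3 * (2 * y - 1)) ''
        {y | 4 * y ^ 3 - 3 * y = 27 * F / (4 * α ^ 2 * lam ^ 3) - 1} := by
  ext σ
  simp only [Set.mem_ofPred_eq, Set.mem_image]
  constructor
  · intro hσ
    refine ⟨(3 * σ / (α * lam) + 1) / 2, ?_, by field_simp; ring⟩
    rw [← hσ]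
    field_simp
    ring
  · rintro ⟨y, hy, rfl⟩
    field_simp at hy ⊢
    linear_combination hy

theorem stmt_8_general (n : ℕ) (α lam : ℝ) (hα : 0 < α) (hlam : 0 < lam)
    (f : EuclideanSpace ℝ (Fin n))
    (hf' : ‖f‖ ^ 2 < 8 * α ^ 2 * lam ^ 3 / 27) :
    {σ : ℝ | 2 * σ ^ 2 * (σ / α + lam) = ‖f‖ ^ 2} =
      (fun θ : ℝ => α * lam / 3 *
          (2 * Real.cos ((1 / 3) * Real.arccos (27 * ‖f‖ ^ 2 / (4 * α ^ 2 * lam ^ 3) - 1) + θ) - 1))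
        '' {0, 4 * Real.pi / 3, 2 * Real.pi / 3} := by
  set c := 27 * ‖f‖ ^ 2 / (4 * α ^ 2 * lam ^ 3) - 1
  have hden : 0 < 4 * α ^ 2 * lam ^ 3 := by positivity
  have hc_lower : -1 ≤ c := by
    have : 0 ≤ 27 * ‖f‖ ^ 2 / (4 * α ^ 2 * lam ^ 3) := by positivity
    linarith
  have hc_upper : c ≤ 1 := by
    have : 27 * ‖f‖ ^ 2 / (4 * α ^ 2 * lam ^ 3) ≤ 2 := by
      rw [div_le_iff₀ hden]
      linarith
    linarith
  have hcos : cos (3 * (1 / 3 * arccos c)) = c := by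
    rw [← mul_assoc, show (3 : ℝ) * (1 / 3) = 1 by norm_num, one_mul, cos_arccos hc_lower hc_upper]
  rw [setOf_two_mul_sq_mul_div_add_eq hα.ne' hlam.ne', setOf_four_mul_cube_sub_three_mul_eq hcos,
    Set.image_image]

/-- For `0 < ‖f‖² < 8α²λ³/27`, the numbers
`σ_θ = (αλ/3)(2cos((1/3)arccos(27‖f‖²/(4α²λ³) − 1) + θ) − 1)` for
`θ ∈ {0, 4π/3, 2π/3}` are exactly the three real roots of the cubic
`2σ²(σ/α + λ) = ‖f‖²`. -/
theorem stmt_8 (n : ℕ) (α lam : ℝ) (hα : 0 < α) (hlam : 0 < lam)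
    (f : EuclideanSpace ℝ (Fin n))
    (hf : 0 < ‖f‖ ^ 2) (hf' : ‖f‖ ^ 2 < 8 * α ^ 2 * lam ^ 3 / 27) :
    {σ : ℝ | 2 * σ ^ 2 * (σ / α + lam) = ‖f‖ ^ 2} =
      (fun θ : ℝ => α * lam / 3 *
          (2 * Real.cos ((1 / 3) * Real.arccos (27 * ‖f‖ ^ 2 / (4 * α ^ 2 * lam ^ 3) - 1) + θ) - 1))
        '' {0, 4 * Real.pi / 3, 2 * Real.pi / 3} :=
  stmt_8_general n α lam hα hlam f hf'
end

section
/- If σ₁ > 0 satisfies 2σ₁²(σ₁/α + λ) = |f|², then x₁ = f/σ₁ is a global minimizer of Π over ℝⁿ. -/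
/-!
Canonical duality. For `σ > 0`, `t = ‖x‖²/2 - λ` and every `x`, the two elementary bounds
`σ t - σ²/(2α) ≤ (α/2) t²` and `-‖f‖²/(2σ) ≤ σ‖x‖²/2 - ⟪f, x⟫` add up to
`Πᵈ(σ) := -‖f‖²/(2σ) - σλ - σ²/(2α) ≤ Π(x)`. The equation for `σ₁` says that `x₁ = f/σ₁` has
`‖x₁‖²/2 - λ = σ₁/α`, which is the equality case of both bounds, so `Π(x₁) = Πᵈ(σ₁) ≤ Π(x)`.
-/

open RealInnerProductSpace

section DoubleWell

variable {E : Type*} [NormedAddCommGroup E] [InnerProductSpace ℝ E]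

noncomputable def doubleWellEnergy (α lam : ℝ) (f x : E) : ℝ :=
  α / 2 * (‖x‖ ^ 2 / 2 - lam) ^ 2 - ⟪f, x⟫

noncomputable def doubleWellDual (α lam : ℝ) (f : E) (σ : ℝ) : ℝ :=
  -‖f‖ ^ 2 / (2 * σ) - σ * lam - σ ^ 2 / (2 * α)

lemma mul_sub_sq_div_le_half_mul_sq {α : ℝ} (hα : 0 < α) (σ t : ℝ) :
    σ * t - σ ^ 2 / (2 * α) ≤ α / 2 * t ^ 2 := by
  have hsq : α / 2 * t ^ 2 - (σ * t - σ ^ 2 / (2 * α)) = α / 2 * (t - σ / α) ^ 2 := by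
    field_simp
    ring
  nlinarith [mul_nonneg hα.le (sq_nonneg (t - σ / α))]

lemma neg_norm_sq_div_le_inner {σ : ℝ} (hσ : 0 < σ) (f x : E) :
    -‖f‖ ^ 2 / (2 * σ) ≤ σ / 2 * ‖x‖ ^ 2 - ⟪f, x⟫ := by
  have hsq : σ / 2 * ‖x‖ ^ 2 - ⟪f, x⟫ - -‖f‖ ^ 2 / (2 * σ) = σ / 2 * ‖x - σ⁻¹ • f‖ ^ 2 := by
    rw [norm_sub_sq_real, inner_smul_right, norm_smul, real_inner_comm, Real.norm_eq_abs,
      abs_inv, abs_of_pos hσ]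
    field_simp
    ring
  nlinarith [mul_nonneg hσ.le (sq_nonneg ‖x - σ⁻¹ • f‖)]

theorem doubleWellDual_le_energy {α σ : ℝ} (hα : 0 < α) (hσ : 0 < σ) (lam : ℝ) (f x : E) :
    doubleWellDual α lam f σ ≤ doubleWellEnergy α lam f x := by
  have hquad := mul_sub_sq_div_le_half_mul_sq hα σ (‖x‖ ^ 2 / 2 - lam)
  have hlin := neg_norm_sq_div_le_inner hσ f x
  unfold doubleWellDual doubleWellEnergy
  linarith

theorem doubleWellEnergy_inv_smul_eq_dual {α σ lam : ℝ} (hα : α ≠ 0) (hσ : σ ≠ 0) {f : E}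
    (hroot : 2 * σ ^ 2 * (σ / α + lam) = ‖f‖ ^ 2) :
    doubleWellEnergy α lam f (σ⁻¹ • f) = doubleWellDual α lam f σ := by
  unfold doubleWellEnergy doubleWellDual
  rw [inner_smul_right, real_inner_self_eq_norm_sq, norm_smul, mul_pow, Real.norm_eq_abs,
    sq_abs, ← hroot]
  field_simp
  ring

end DoubleWell

theorem stmt_10_general (n : ℕ) (α lam : ℝ) (hα : 0 < α)
    (f : EuclideanSpace ℝ (Fin n))
    (σ₁ : ℝ) (hσ₁ : 0 < σ₁) (hroot : 2 * σ₁ ^ 2 * (σ₁ / α + lam) = ‖f‖ ^ 2) :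
    ∀ x : EuclideanSpace ℝ (Fin n),
      α / 2 * (‖σ₁⁻¹ • f‖ ^ 2 / 2 - lam) ^ 2 - ⟪f, σ₁⁻¹ • f⟫
        ≤ α / 2 * (‖x‖ ^ 2 / 2 - lam) ^ 2 - ⟪f, x⟫ := fun x =>
  calc doubleWellEnergy α lam f (σ₁⁻¹ • f)
      = doubleWellDual α lam f σ₁ := doubleWellEnergy_inv_smul_eq_dual hα.ne' hσ₁.ne' hroot
    _ ≤ doubleWellEnergy α lam f x := doubleWellDual_le_energy hα hσ₁ lam f x

/-- If `σ₁ > 0` satisfies `2σ₁²(σ₁/α + λ) = ‖f‖²`, then `x₁ = f/σ₁` is a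
global minimizer of `Π` over `ℝⁿ`. -/
theorem stmt_10 (n : ℕ) (α lam : ℝ) (hα : 0 < α) (hlam : 0 < lam)
    (f : EuclideanSpace ℝ (Fin n)) (hf : f ≠ 0)
    (σ₁ : ℝ) (hσ₁ : 0 < σ₁) (hroot : 2 * σ₁ ^ 2 * (σ₁ / α + lam) = ‖f‖ ^ 2) :
    ∀ x : EuclideanSpace ℝ (Fin n),
      α / 2 * (‖σ₁⁻¹ • f‖ ^ 2 / 2 - lam) ^ 2 - ⟪f, σ₁⁻¹ • f⟫
        ≤ α / 2 * (‖x‖ ^ 2 / 2 - lam) ^ 2 - ⟪f, x⟫ :=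
  stmt_10_general n α lam hα f σ₁ hσ₁ hroot
end

section
/- min over x ∈ ℝⁿ of Π(x) equals max over σ ∈ (0, ∞) of Π^d(σ): both are attained and equal, at x₁ = f/σ₁ and σ₁ respectively, where σ₁ is the unique positive root of 2σ²(σ/α + λ) = |f|². -/
open RealInnerProductSpace Set Filter

/-!
Canonical duality: with `V(ξ) = α/2 (ξ - λ)²` and its conjugate `V*(σ) = σ²/(2α) + λσ`, the
Fenchel–Young inequality `V(‖x‖²/2) ≥ σ‖x‖²/2 - V*(σ)` followed by minimising the quadratic
`σ‖x‖²/2 - ⟪f, x⟫` over `x` gives weak duality `Π^d(σ) ≤ Π(x)` for every `x` and every `σ > 0`.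
At the root `σ₁` of `2σ²(σ/α + λ) = ‖f‖²` both inequalities are equalities for `x₁ = f/σ₁`, so
`Π(x₁) = Π^d(σ₁)` and weak duality makes `x₁` a global minimiser and `σ₁` a global maximiser.
The root exists and is unique because the cubic is continuous and strictly increasing on
`[0, ∞)`, from `0` to `∞`.
-/

section CanonicalDuality

variable {E : Type*} [NormedAddCommGroup E] [InnerProductSpace ℝ E]

noncomputable def primalEnergy (α lam : ℝ) (f x : E) : ℝ :=
  α / 2 * (‖x‖ ^ 2 / 2 - lam) ^ 2 - ⟪f, x⟫

noncomputable def dualEnergy (α lam : ℝ) (f : E) (σ : ℝ) : ℝ :=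
  -‖f‖ ^ 2 / (2 * σ) - σ ^ 2 / (2 * α) - σ * lam

lemma fenchel_young_sq {α : ℝ} (hα : 0 < α) (lam ξ σ : ℝ) :
    ξ * σ - (σ ^ 2 / (2 * α) + lam * σ) ≤ α / 2 * (ξ - lam) ^ 2 := by
  have key : α / 2 * (ξ - lam) ^ 2 - (ξ * σ - (σ ^ 2 / (2 * α) + lam * σ))
      = (α * (ξ - lam) - σ) ^ 2 / (2 * α) := by
    field_simp
    ring
  have : 0 ≤ (α * (ξ - lam) - σ) ^ 2 / (2 * α) := by positivity
  linarith

lemma neg_norm_sq_div_le_quadratic {σ : ℝ} (hσ : 0 < σ) (f x : E) :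
    -‖f‖ ^ 2 / (2 * σ) ≤ σ * ‖x‖ ^ 2 / 2 - ⟪f, x⟫ := by
  have hsq : 0 ≤ ‖σ • x - f‖ ^ 2 := sq_nonneg _
  rw [norm_sub_sq_real, norm_smul, real_inner_smul_left, Real.norm_of_nonneg hσ.le,
    real_inner_comm] at hsq
  rw [div_le_iff₀ (by positivity)]
  nlinarith

theorem dualEnergy_le_primalEnergy {α : ℝ} (hα : 0 < α) (lam : ℝ) (f x : E) {σ : ℝ}
    (hσ : 0 < σ) : dualEnergy α lam f σ ≤ primalEnergy α lam f x := by
  unfold dualEnergy primalEnergy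
  linarith [fenchel_young_sq hα lam (‖x‖ ^ 2 / 2) σ, neg_norm_sq_div_le_quadratic hσ f x]

theorem primalEnergy_inv_smul_eq_dualEnergy {α lam σ : ℝ} (hα : 0 < α) (hσ : 0 < σ) (f : E)
    (hroot : 2 * σ ^ 2 * (σ / α + lam) = ‖f‖ ^ 2) :
    primalEnergy α lam f (σ⁻¹ • f) = dualEnergy α lam f σ := by
  have hcrit : ‖σ⁻¹ • f‖ ^ 2 / 2 - lam = σ / α := by
    rw [norm_smul, Real.norm_of_nonneg (inv_nonneg.2 hσ.le), mul_pow, ← hroot]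
    field_simp
    ring
  unfold primalEnergy dualEnergy
  rw [hcrit, real_inner_smul_right, real_inner_self_eq_norm_sq, ← hroot]
  field_simp
  ring

end CanonicalDuality

section Root

variable {α lam : ℝ}

lemma strictMonoOn_cubic (hα : 0 < α) (hlam : 0 ≤ lam) :
    StrictMonoOn (fun σ : ℝ => 2 * σ ^ 2 * (σ / α + lam)) (Ici 0) := by
  intro a (ha : 0 ≤ a) b (hb : 0 ≤ b) hab
  exact mul_lt_mul'' (by gcongr) (by gcongr) (by positivity) (by positivity)

lemma tendsto_cubic_atTop (hα : 0 < α) :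
    Tendsto (fun σ : ℝ => 2 * σ ^ 2 * (σ / α + lam)) atTop atTop :=
  ((tendsto_pow_atTop two_ne_zero).const_mul_atTop two_pos).atTop_mul_atTop₀
    (tendsto_atTop_add_const_right _ _ (tendsto_id.atTop_div_const hα))

lemma exists_pos_cubic_eq (hα : 0 < α) {c : ℝ} (hc : 0 < c) :
    ∃ σ, 0 < σ ∧ 2 * σ ^ 2 * (σ / α + lam) = c := by
  obtain ⟨σ, hσ : 0 ≤ σ, hroot⟩ :=
    intermediate_value_Ici (by fun_prop) (tendsto_cubic_atTop hα)
      (show 2 * 0 ^ 2 * (0 / α + lam) ≤ c by simpa using hc.le)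
  refine ⟨σ, hσ.lt_of_ne ?_, hroot⟩
  rintro rfl
  simp [← hroot] at hc

end Root

/-- `min Π = max_{σ>0} Π^d`: both are attained (at `x₁ = f/σ₁` and at `σ₁`
respectively, where `σ₁` is the unique positive root of
`2σ²(σ/α + λ) = ‖f‖²`) and equal. -/
theorem stmt_12 (n : ℕ) (α lam : ℝ) (hα : 0 < α) (hlam : 0 < lam)
    (f : EuclideanSpace ℝ (Fin n)) (hf : f ≠ 0) :
    ∃ σ₁ : ℝ, 0 < σ₁ ∧ 2 * σ₁ ^ 2 * (σ₁ / α + lam) = ‖f‖ ^ 2 ∧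
      (∀ σ : ℝ, 0 < σ → 2 * σ ^ 2 * (σ / α + lam) = ‖f‖ ^ 2 → σ = σ₁) ∧
      (∀ x : EuclideanSpace ℝ (Fin n),
        α / 2 * (‖σ₁⁻¹ • f‖ ^ 2 / 2 - lam) ^ 2 - ⟪f, σ₁⁻¹ • f⟫
          ≤ α / 2 * (‖x‖ ^ 2 / 2 - lam) ^ 2 - ⟪f, x⟫) ∧
      (∀ σ : ℝ, 0 < σ →
        -‖f‖ ^ 2 / (2 * σ) - σ ^ 2 / (2 * α) - σ * lam
          ≤ -‖f‖ ^ 2 / (2 * σ₁) - σ₁ ^ 2 / (2 * α) - σ₁ * lam) ∧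
      α / 2 * (‖σ₁⁻¹ • f‖ ^ 2 / 2 - lam) ^ 2 - ⟪f, σ₁⁻¹ • f⟫
        = -‖f‖ ^ 2 / (2 * σ₁) - σ₁ ^ 2 / (2 * α) - σ₁ * lam := by
  obtain ⟨σ₁, hσ₁, hroot⟩ := exists_pos_cubic_eq (lam := lam) hα (pow_pos (norm_pos_iff.2 hf) 2)
  have gap := primalEnergy_inv_smul_eq_dualEnergy hα hσ₁ f hroot
  refine ⟨σ₁, hσ₁, hroot, fun σ hσ hσroot => ?_, fun x => ?_, fun σ hσ => ?_, gap⟩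
  · exact strictMonoOn_cubic hα hlam.le |>.injOn (mem_Ici.2 hσ.le) (mem_Ici.2 hσ₁.le)
      (hσroot.trans hroot.symm)
  · exact gap.trans_le (dualEnergy_le_primalEnergy hα lam f x hσ₁)
  · exact (dualEnergy_le_primalEnergy hα lam f (σ₁⁻¹ • f) hσ).trans_eq gap
end

section
/- Let σ₂ be a root of 2σ²(σ/α + λ) = |f|² with −2αλ/3 < σ₂ < 0, x₂ = f/σ₂, and z ∈ ℝⁿ \ {0}. Define φ(t) = Π(x₂ + tz). Then φ'(0) = 0 and φ''(0) = |z|²((2σ₂ + 2αλ)cos²θ + σ₂), where cosθ = ⟨f, z⟩/(|f||z|). Consequently, if cos²θ < −σ₂/(2σ₂ + 2αλ) then t = 0 is a strict local maximizer of φ, and if cos²θ > −σ₂/(2σ₂ + 2αλ) then t = 0 is a strict local minimizer of φ; in particular x₂ is a saddle point of Π (for n ≥ 2). -/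
/-!
Along a line `x + t z` the energy `Π` is a quartic polynomial in `t`. At a critical point,
`α (‖x‖²/2 - λ) x = f`, its linear term cancels and `Π(x + t z) - Π(x) = t² g(t)` with `g`
continuous and `2 g(0) = φ''(0)`, so the sign of `φ''(0)` decides whether `t = 0` is a strict
local maximum or minimum. For `x₂ = f/σ₂` the root equation says exactly
`α (‖x₂‖²/2 - λ) = σ₂`, which makes `x₂` critical and turns `φ''(0) = α⟪x₂, z⟫² + σ₂‖z‖²` into
the `cos θ` formula. As `σ₂ < 0 < 3σ₂ + 2αλ`, the direction `f` gives a strict minimum and any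
nonzero direction orthogonal to `f` a strict maximum, so `x₂` is a saddle point.
-/

open RealInnerProductSpace Filter Topology

lemma exists_pos_forall_sq_mul_neg {g : ℝ → ℝ} (hg : ContinuousAt g 0) (h0 : g 0 < 0) :
    ∃ ε > 0, ∀ t : ℝ, t ≠ 0 → |t| < ε → t ^ 2 * g t < 0 := by
  obtain ⟨ε, hε, hball⟩ := Metric.eventually_nhds_iff.mp (hg.eventually_lt continuousAt_const h0)
  exact ⟨ε, hε, fun t ht htε =>
    mul_neg_of_pos_of_neg (by positivity) (hball (by simpa [Real.dist_eq] using htε))⟩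

lemma exists_pos_forall_sq_mul_pos {g : ℝ → ℝ} (hg : ContinuousAt g 0) (h0 : 0 < g 0) :
    ∃ ε > 0, ∀ t : ℝ, t ≠ 0 → |t| < ε → 0 < t ^ 2 * g t := by
  obtain ⟨ε, hε, hball⟩ := Metric.eventually_nhds_iff.mp (continuousAt_const.eventually_lt hg h0)
  exact ⟨ε, hε, fun t ht htε =>
    mul_pos (by positivity) (hball (by simpa [Real.dist_eq] using htε))⟩

section

variable {E : Type*} [NormedAddCommGroup E] [InnerProductSpace ℝ E]

lemma not_isLocalMin_of_forall_lt_along_line {F : E → ℝ} {x z : E}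
    (h : ∃ ε > 0, ∀ t : ℝ, t ≠ 0 → |t| < ε → F (x + t • z) < F x) : ¬ IsLocalMin F x := by
  intro hmin
  obtain ⟨ε, hε, hlt⟩ := h
  have hline : IsLocalMin (fun t : ℝ => F (x + t • z)) 0 :=
    IsLocalMin.comp_continuous (g := fun t : ℝ => x + t • z) (by simpa using hmin) (by fun_prop)
  have hpunct : ∀ᶠ t in 𝓝[≠] (0 : ℝ), F (x + t • z) < F x := by
    rw [eventually_nhdsWithin_iff, Metric.eventually_nhds_iff]
    exact ⟨ε, hε, fun t ht hne => hlt t hne (by simpa [Real.dist_eq] using ht)⟩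
  obtain ⟨t, hlt_t, hle_t⟩ := (hpunct.and (nhdsWithin_le_nhds hline)).exists
  simp only [zero_smul, add_zero] at hle_t
  exact hle_t.not_gt hlt_t

lemma not_isLocalMax_of_forall_gt_along_line {F : E → ℝ} {x z : E}
    (h : ∃ ε > 0, ∀ t : ℝ, t ≠ 0 → |t| < ε → F x < F (x + t • z)) : ¬ IsLocalMax F x := by
  refine fun hmax => not_isLocalMin_of_forall_lt_along_line (F := fun y => -F y) (z := z) ?_ hmax.neg
  obtain ⟨ε, hε, hgt⟩ := h
  exact ⟨ε, hε, fun t ht htε => neg_lt_neg (hgt t ht htε)⟩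

lemma exists_ne_zero_inner_eq_zero [FiniteDimensional ℝ E] (hE : 2 ≤ Module.finrank ℝ E) (f : E) :
    ∃ w : E, w ≠ 0 ∧ ⟪f, w⟫ = 0 := by
  have hne : (ℝ ∙ f)ᗮ ≠ ⊥ := by
    intro hbot
    have := (ℝ ∙ f).finrank_add_finrank_orthogonal
    rw [hbot, finrank_bot] at this
    have := finrank_span_le_card (R := ℝ) ({f} : Set E)
    simp only [Set.toFinset_singleton, Finset.card_singleton] at this
    omega
  obtain ⟨w, hw, hw0⟩ := Submodule.exists_mem_ne_zero_of_ne_bot hne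
  exact ⟨w, hw0, (Submodule.mem_orthogonal_singleton_iff_inner_right).mp hw⟩

/-- The energy `Π` of the paper; its gradient at `x` is `α (‖x‖²/2 - λ) x - f`. -/
noncomputable def doubleWell (α lam : ℝ) (f x : E) : ℝ :=
  α / 2 * (‖x‖ ^ 2 / 2 - lam) ^ 2 - ⟪f, x⟫

variable {α lam σ : ℝ} {f x z : E}

lemma hasDerivAt_doubleWell_line (t : ℝ) :
    HasDerivAt (fun t : ℝ => doubleWell α lam f (x + t • z))
      (α * (‖x + t • z‖ ^ 2 / 2 - lam) * ⟪x + t • z, z⟫ - ⟪f, z⟫) t := by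
  have hline : HasDerivAt (fun t : ℝ => x + t • z) z t := by
    simpa using ((hasDerivAt_id t).smul_const z).const_add x
  have hnorm := hline.norm_sq
  have hinner : HasDerivAt (fun t : ℝ => ⟪f, x + t • z⟫) ⟪f, z⟫ t := by
    simpa using (hasDerivAt_const t f).inner ℝ hline
  exact ((((hnorm.div_const 2).sub_const lam).pow 2).const_mul (α / 2) |>.sub hinner).congr_deriv
    (by push_cast; ring)

lemma deriv_doubleWell_line :
    deriv (fun t : ℝ => doubleWell α lam f (x + t • z))
      = fun t => α * (‖x + t • z‖ ^ 2 / 2 - lam) * ⟪x + t • z, z⟫ - ⟪f, z⟫ :=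
  funext fun t => (hasDerivAt_doubleWell_line t).deriv

lemma deriv_deriv_doubleWell_line (t : ℝ) :
    deriv (deriv fun t : ℝ => doubleWell α lam f (x + t • z)) t
      = α * ⟪x + t • z, z⟫ ^ 2 + α * (‖x + t • z‖ ^ 2 / 2 - lam) * ‖z‖ ^ 2 := by
  have hline : HasDerivAt (fun t : ℝ => x + t • z) z t := by
    simpa using ((hasDerivAt_id t).smul_const z).const_add x
  have hinner : HasDerivAt (fun t : ℝ => ⟪x + t • z, z⟫) (‖z‖ ^ 2) t := by
    simpa [real_inner_self_eq_norm_sq] using hline.inner ℝ (hasDerivAt_const t z)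
  rw [deriv_doubleWell_line]
  refine (((((hline.norm_sq.div_const 2).sub_const lam).const_mul α).mul hinner).sub_const
    ⟪f, z⟫).deriv.trans ?_
  rw [real_inner_comm z]
  ring

lemma deriv_doubleWell_line_zero (hcrit : (α * (‖x‖ ^ 2 / 2 - lam)) • x = f) :
    deriv (fun t : ℝ => doubleWell α lam f (x + t • z)) 0 = 0 := by
  rw [deriv_doubleWell_line, ← hcrit]
  simp [real_inner_smul_left]

lemma doubleWell_line_eq (hcrit : (α * (‖x‖ ^ 2 / 2 - lam)) • x = f) (t : ℝ) :
    doubleWell α lam f (x + t • z) = doubleWell α lam f x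
      + t ^ 2 * (α / 2 * ((‖x‖ ^ 2 / 2 - lam) * ‖z‖ ^ 2 + (⟪x, z⟫ + t * ‖z‖ ^ 2 / 2) ^ 2)) := by
  have hfz : ⟪f, z⟫ = α * (‖x‖ ^ 2 / 2 - lam) * ⟪x, z⟫ := by
    rw [← hcrit, real_inner_smul_left]
  simp only [doubleWell, norm_add_sq_real, inner_add_right, real_inner_smul_right, norm_smul,
    Real.norm_eq_abs, mul_pow, sq_abs, hfz]
  ring

lemma exists_doubleWell_line_lt (hcrit : (α * (‖x‖ ^ 2 / 2 - lam)) • x = f)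
    (hneg : deriv (deriv fun t : ℝ => doubleWell α lam f (x + t • z)) 0 < 0) :
    ∃ ε > 0, ∀ t : ℝ, t ≠ 0 → |t| < ε →
      doubleWell α lam f (x + t • z) < doubleWell α lam f x := by
  rw [deriv_deriv_doubleWell_line] at hneg
  obtain ⟨ε, hε, h⟩ := exists_pos_forall_sq_mul_neg
    (g := fun t => α / 2 * ((‖x‖ ^ 2 / 2 - lam) * ‖z‖ ^ 2 + (⟪x, z⟫ + t * ‖z‖ ^ 2 / 2) ^ 2))
    (by fun_prop) (by simp only [zero_smul, add_zero] at hneg; linarith)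
  exact ⟨ε, hε, fun t ht htε => by linarith [doubleWell_line_eq (z := z) hcrit t, h t ht htε]⟩

lemma exists_lt_doubleWell_line (hcrit : (α * (‖x‖ ^ 2 / 2 - lam)) • x = f)
    (hpos : 0 < deriv (deriv fun t : ℝ => doubleWell α lam f (x + t • z)) 0) :
    ∃ ε > 0, ∀ t : ℝ, t ≠ 0 → |t| < ε →
      doubleWell α lam f x < doubleWell α lam f (x + t • z) := by
  rw [deriv_deriv_doubleWell_line] at hpos
  obtain ⟨ε, hε, h⟩ := exists_pos_forall_sq_mul_pos
    (g := fun t => α / 2 * ((‖x‖ ^ 2 / 2 - lam) * ‖z‖ ^ 2 + (⟪x, z⟫ + t * ‖z‖ ^ 2 / 2) ^ 2))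
    (by fun_prop) (by simp only [zero_smul, add_zero] at hpos; linarith)
  exact ⟨ε, hε, fun t ht htε => by linarith [doubleWell_line_eq (z := z) hcrit t, h t ht htε]⟩

lemma mul_norm_inv_smul_sq_div_two_sub (hα : α ≠ 0) (hσ : σ ≠ 0)
    (hroot : 2 * σ ^ 2 * (σ / α + lam) = ‖f‖ ^ 2) :
    α * (‖σ⁻¹ • f‖ ^ 2 / 2 - lam) = σ := by
  rw [norm_smul, mul_pow, norm_inv, Real.norm_eq_abs, inv_pow, sq_abs, ← hroot]
  field_simp
  ring

lemma deriv_deriv_doubleWell_line_inv_smul (hα : α ≠ 0) (hσ : σ ≠ 0) (hf : f ≠ 0)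
    (hroot : 2 * σ ^ 2 * (σ / α + lam) = ‖f‖ ^ 2) (z : E) :
    deriv (deriv fun t : ℝ => doubleWell α lam f (σ⁻¹ • f + t • z)) 0
      = ‖z‖ ^ 2 * ((2 * σ + 2 * α * lam) * (⟪f, z⟫ / (‖f‖ * ‖z‖)) ^ 2 + σ) := by
  have hf' : ‖f‖ ≠ 0 := norm_ne_zero_iff.mpr hf
  have hαf : α * ‖f‖ ^ 2 = (2 * σ + 2 * α * lam) * σ ^ 2 := by
    rw [← hroot]; field_simp
  rw [deriv_deriv_doubleWell_line, zero_smul, add_zero,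
    mul_norm_inv_smul_sq_div_two_sub hα hσ hroot, real_inner_smul_left]
  rcases eq_or_ne z 0 with rfl | hz
  · simp
  have hz' : ‖z‖ ≠ 0 := norm_ne_zero_iff.mpr hz
  field_simp
  linear_combination ⟪f, z⟫ ^ 2 * hαf

end

theorem stmt_15_general (n : ℕ) (α lam : ℝ) (hα : 0 < α)
    (f : EuclideanSpace ℝ (Fin n)) (hf : f ≠ 0)
    (σ₂ : ℝ) (hroot : 2 * σ₂ ^ 2 * (σ₂ / α + lam) = ‖f‖ ^ 2)
    (h₁ : -2 * α * lam / 3 < σ₂) (h₂ : σ₂ < 0)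
    (z : EuclideanSpace ℝ (Fin n)) (hz : z ≠ 0) :
    deriv (fun t : ℝ =>
        α / 2 * (‖σ₂⁻¹ • f + t • z‖ ^ 2 / 2 - lam) ^ 2 - ⟪f, σ₂⁻¹ • f + t • z⟫) 0 = 0 ∧
    deriv (deriv (fun t : ℝ =>
        α / 2 * (‖σ₂⁻¹ • f + t • z‖ ^ 2 / 2 - lam) ^ 2 - ⟪f, σ₂⁻¹ • f + t • z⟫)) 0
      = ‖z‖ ^ 2 * ((2 * σ₂ + 2 * α * lam) * (⟪f, z⟫ / (‖f‖ * ‖z‖)) ^ 2 + σ₂) ∧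
    ((⟪f, z⟫ / (‖f‖ * ‖z‖)) ^ 2 < -σ₂ / (2 * σ₂ + 2 * α * lam) →
      ∃ ε > 0, ∀ t : ℝ, t ≠ 0 → |t| < ε →
        α / 2 * (‖σ₂⁻¹ • f + t • z‖ ^ 2 / 2 - lam) ^ 2 - ⟪f, σ₂⁻¹ • f + t • z⟫
          < α / 2 * (‖σ₂⁻¹ • f‖ ^ 2 / 2 - lam) ^ 2 - ⟪f, σ₂⁻¹ • f⟫) ∧
    ((⟪f, z⟫ / (‖f‖ * ‖z‖)) ^ 2 > -σ₂ / (2 * σ₂ + 2 * α * lam) →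
      ∃ ε > 0, ∀ t : ℝ, t ≠ 0 → |t| < ε →
        α / 2 * (‖σ₂⁻¹ • f‖ ^ 2 / 2 - lam) ^ 2 - ⟪f, σ₂⁻¹ • f⟫
          < α / 2 * (‖σ₂⁻¹ • f + t • z‖ ^ 2 / 2 - lam) ^ 2 - ⟪f, σ₂⁻¹ • f + t • z⟫) ∧
    (2 ≤ n →
      ¬ IsLocalMax (fun x : EuclideanSpace ℝ (Fin n) =>
          α / 2 * (‖x‖ ^ 2 / 2 - lam) ^ 2 - ⟪f, x⟫) (σ₂⁻¹ • f) ∧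
      ¬ IsLocalMin (fun x : EuclideanSpace ℝ (Fin n) =>
          α / 2 * (‖x‖ ^ 2 / 2 - lam) ^ 2 - ⟪f, x⟫) (σ₂⁻¹ • f)) := by
  have hσ : σ₂ ≠ 0 := h₂.ne
  have hD : 0 < 2 * σ₂ + 2 * α * lam := by linarith
  have hcrit : (α * (‖σ₂⁻¹ • f‖ ^ 2 / 2 - lam)) • σ₂⁻¹ • f = f := by
    rw [mul_norm_inv_smul_sq_div_two_sub hα.ne' hσ hroot, smul_inv_smul₀ hσ]
  have hd2 := deriv_deriv_doubleWell_line_inv_smul hα.ne' hσ hf hroot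
  have hmax : ∀ w : EuclideanSpace ℝ (Fin n), w ≠ 0 →
      (⟪f, w⟫ / (‖f‖ * ‖w‖)) ^ 2 < -σ₂ / (2 * σ₂ + 2 * α * lam) → ∃ ε > 0, ∀ t : ℝ, t ≠ 0 →
        |t| < ε → doubleWell α lam f (σ₂⁻¹ • f + t • w) < doubleWell α lam f (σ₂⁻¹ • f) := by
    intro w hw hcos
    rw [lt_div_iff₀ hD] at hcos
    refine exists_doubleWell_line_lt hcrit ?_
    rw [hd2]
    exact mul_neg_of_pos_of_neg (pow_pos (norm_pos_iff.mpr hw) 2) (by linarith)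
  have hmin : ∀ w : EuclideanSpace ℝ (Fin n), w ≠ 0 →
      (⟪f, w⟫ / (‖f‖ * ‖w‖)) ^ 2 > -σ₂ / (2 * σ₂ + 2 * α * lam) → ∃ ε > 0, ∀ t : ℝ, t ≠ 0 →
        |t| < ε → doubleWell α lam f (σ₂⁻¹ • f) < doubleWell α lam f (σ₂⁻¹ • f + t • w) := by
    intro w hw hcos
    rw [gt_iff_lt, div_lt_iff₀ hD] at hcos
    refine exists_lt_doubleWell_line hcrit ?_
    rw [hd2]
    exact mul_pos (pow_pos (norm_pos_iff.mpr hw) 2) (by linarith)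
  refine ⟨deriv_doubleWell_line_zero hcrit, hd2 z, hmax z hz, hmin z hz, fun hn => ⟨?_, ?_⟩⟩
  · refine not_isLocalMax_of_forall_gt_along_line (hmin f hf ?_)
    rw [real_inner_self_eq_norm_mul_norm, div_self (by positivity), one_pow, gt_iff_lt,
      div_lt_one hD]
    linarith
  · obtain ⟨w, hw, hfw⟩ := exists_ne_zero_inner_eq_zero (by simpa using hn) f
    refine not_isLocalMin_of_forall_lt_along_line (hmax w hw ?_)
    rw [hfw, zero_div, zero_pow two_ne_zero]
    exact div_pos (neg_pos.mpr h₂) hD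

/-- Let `σ₂` be a root of `2σ²(σ/α + λ) = ‖f‖²` with `−2αλ/3 < σ₂ < 0`,
`x₂ = f/σ₂`, `z ≠ 0`, and `φ(t) = Π(x₂ + t z)`. Then `φ'(0) = 0` and
`φ''(0) = ‖z‖²((2σ₂ + 2αλ)cos²θ + σ₂)` with `cosθ = ⟪f,z⟫/(‖f‖‖z‖)`; if
`cos²θ < −σ₂/(2σ₂ + 2αλ)` then `0` is a strict local maximizer of `φ`, and if
`cos²θ > −σ₂/(2σ₂ + 2αλ)` then `0` is a strict local minimizer; in particular
(for `n ≥ 2`) `x₂` is a saddle point of `Π`. -/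
theorem stmt_15 (n : ℕ) (α lam : ℝ) (hα : 0 < α) (hlam : 0 < lam)
    (f : EuclideanSpace ℝ (Fin n)) (hf : f ≠ 0)
    (hfs : 0 < ‖f‖ ^ 2) (hfs' : ‖f‖ ^ 2 < 8 * α ^ 2 * lam ^ 3 / 27)
    (σ₂ : ℝ) (hroot : 2 * σ₂ ^ 2 * (σ₂ / α + lam) = ‖f‖ ^ 2)
    (h₁ : -2 * α * lam / 3 < σ₂) (h₂ : σ₂ < 0)
    (z : EuclideanSpace ℝ (Fin n)) (hz : z ≠ 0) :
    deriv (fun t : ℝ =>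
        α / 2 * (‖σ₂⁻¹ • f + t • z‖ ^ 2 / 2 - lam) ^ 2 - ⟪f, σ₂⁻¹ • f + t • z⟫) 0 = 0 ∧
    deriv (deriv (fun t : ℝ =>
        α / 2 * (‖σ₂⁻¹ • f + t • z‖ ^ 2 / 2 - lam) ^ 2 - ⟪f, σ₂⁻¹ • f + t • z⟫)) 0
      = ‖z‖ ^ 2 * ((2 * σ₂ + 2 * α * lam) * (⟪f, z⟫ / (‖f‖ * ‖z‖)) ^ 2 + σ₂) ∧
    ((⟪f, z⟫ / (‖f‖ * ‖z‖)) ^ 2 < -σ₂ / (2 * σ₂ + 2 * α * lam) →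
      ∃ ε > 0, ∀ t : ℝ, t ≠ 0 → |t| < ε →
        α / 2 * (‖σ₂⁻¹ • f + t • z‖ ^ 2 / 2 - lam) ^ 2 - ⟪f, σ₂⁻¹ • f + t • z⟫
          < α / 2 * (‖σ₂⁻¹ • f‖ ^ 2 / 2 - lam) ^ 2 - ⟪f, σ₂⁻¹ • f⟫) ∧
    ((⟪f, z⟫ / (‖f‖ * ‖z‖)) ^ 2 > -σ₂ / (2 * σ₂ + 2 * α * lam) →
      ∃ ε > 0, ∀ t : ℝ, t ≠ 0 → |t| < ε →
        α / 2 * (‖σ₂⁻¹ • f‖ ^ 2 / 2 - lam) ^ 2 - ⟪f, σ₂⁻¹ • f⟫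
          < α / 2 * (‖σ₂⁻¹ • f + t • z‖ ^ 2 / 2 - lam) ^ 2 - ⟪f, σ₂⁻¹ • f + t • z⟫) ∧
    (2 ≤ n →
      ¬ IsLocalMax (fun x : EuclideanSpace ℝ (Fin n) =>
          α / 2 * (‖x‖ ^ 2 / 2 - lam) ^ 2 - ⟪f, x⟫) (σ₂⁻¹ • f) ∧
      ¬ IsLocalMin (fun x : EuclideanSpace ℝ (Fin n) =>
          α / 2 * (‖x‖ ^ 2 / 2 - lam) ^ 2 - ⟪f, x⟫) (σ₂⁻¹ • f)) :=
  stmt_15_general n α lam hα f hf σ₂ hroot h₁ h₂ z hz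
end

section
/- If |f|² = 8α²λ³/27 and σ₂ = −2αλ/3 (the double root of the cubic), then x₂ = f/σ₂ satisfies zᵀ∇²Π(x₂)z ≤ 0 for all z ∈ ℝⁿ, i.e., the Hessian of Π at x₂ is negative semidefinite. -/
/-!
At the double root `σ₂ = -2αλ/3` the point `x₂ = f / σ₂` has `‖x₂‖² = 2λ/3`. By Cauchy–Schwarz,
`⟪x, z⟫² + (‖x‖²/2 - λ)‖z‖² ≤ (3‖x‖²/2 - λ)‖z‖²`, and the right-hand side vanishes at `x₂`.
-/

open RealInnerProductSpace

section HessianForm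

variable {E : Type*} [NormedAddCommGroup E] [InnerProductSpace ℝ E]

/-- The quadratic form `zᵀ ∇²Π(x) z` of the Hessian `α (x xᵀ + (‖x‖²/2 - λ) I)`. -/
noncomputable def hessianForm (α lam : ℝ) (x z : E) : ℝ :=
  α * (⟪x, z⟫ ^ 2 + (‖x‖ ^ 2 / 2 - lam) * ‖z‖ ^ 2)

theorem real_inner_sq_le_norm_sq_mul_norm_sq (x z : E) : ⟪x, z⟫ ^ 2 ≤ ‖x‖ ^ 2 * ‖z‖ ^ 2 := by
  have h := pow_le_pow_left₀ (abs_nonneg _) (abs_real_inner_le_norm x z) 2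
  rwa [sq_abs, mul_pow] at h

theorem hessianForm_nonpos {α lam : ℝ} (hα : 0 ≤ α) {x : E} (hx : 3 * ‖x‖ ^ 2 ≤ 2 * lam)
    (z : E) : hessianForm α lam x z ≤ 0 := by
  have hform : ⟪x, z⟫ ^ 2 + (‖x‖ ^ 2 / 2 - lam) * ‖z‖ ^ 2 ≤ 0 :=
    calc ⟪x, z⟫ ^ 2 + (‖x‖ ^ 2 / 2 - lam) * ‖z‖ ^ 2
        ≤ ‖x‖ ^ 2 * ‖z‖ ^ 2 + (‖x‖ ^ 2 / 2 - lam) * ‖z‖ ^ 2 := by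
          gcongr; exact real_inner_sq_le_norm_sq_mul_norm_sq x z
      _ = (3 * ‖x‖ ^ 2 - 2 * lam) / 2 * ‖z‖ ^ 2 := by ring
      _ ≤ 0 := mul_nonpos_of_nonpos_of_nonneg (by linarith) (sq_nonneg _)
  exact mul_nonpos_of_nonneg_of_nonpos hα hform

end HessianForm

theorem norm_sq_inv_smul_eq_of_norm_sq_eq {E : Type*} [NormedAddCommGroup E] [NormedSpace ℝ E]
    {α lam : ℝ} (hα : α ≠ 0) (hlam : lam ≠ 0) {f : E}
    (hf : ‖f‖ ^ 2 = 8 * α ^ 2 * lam ^ 3 / 27) :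
    ‖(-2 * α * lam / 3 : ℝ)⁻¹ • f‖ ^ 2 = 2 * lam / 3 := by
  rw [norm_smul, mul_pow, hf, norm_inv, Real.norm_eq_abs, inv_pow, sq_abs]
  field_simp
  ring

/-- If `‖f‖² = 8α²λ³/27` and `σ₂ = −2αλ/3`, then `x₂ = f/σ₂` satisfies
`zᵀ∇²Π(x₂)z = α(⟪x₂,z⟫² + (‖x₂‖²/2 − λ)‖z‖²) ≤ 0` for all `z`. -/
theorem stmt_16 (n : ℕ) (α lam : ℝ) (hα : 0 < α) (hlam : 0 < lam)
    (f : EuclideanSpace ℝ (Fin n)) (hf : ‖f‖ ^ 2 = 8 * α ^ 2 * lam ^ 3 / 27) :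
    ∀ z : EuclideanSpace ℝ (Fin n),
      α * (⟪(-2 * α * lam / 3 : ℝ)⁻¹ • f, z⟫ ^ 2
        + (‖(-2 * α * lam / 3 : ℝ)⁻¹ • f‖ ^ 2 / 2 - lam) * ‖z‖ ^ 2) ≤ 0 :=
  hessianForm_nonpos hα.le
    (by rw [norm_sq_inv_smul_eq_of_norm_sq_eq hα.ne' hlam.ne' hf]; linarith)
end

section
/- Root limits under scaling: with f_k = f₀/k and the ordered roots σ_{1,k} > 0 > σ_{2,k} > −2αλ/3 > σ_{3,k} > −αλ of 2σ²(σ/α + λ) = |f_k|², one has σ_{1,k} → 0, σ_{2,k} → 0, σ_{3,k} → −αλ as k → ∞, and moreover k·σ_{1,k} → |f₀|/√(2λ) and k·σ_{2,k} → −|f₀|/√(2λ). -/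
open Filter Topology

/-!
Write `ε_k = ‖f₀‖²/k² → 0` and `u(σ) = σ/α + λ`, so that each root satisfies
`2σ²u(σ) = ε_k`. For the two roots above `-2αλ/3` the factor `u` stays above `λ/3`,
hence `σ² ≤ 3ε_k/(2λ) → 0`; then `u → λ` and `(kσ)² = ‖f₀‖²/(2u) → ‖f₀‖²/(2λ)`, and
the sign of `σ` picks the square root. For the root below `-2αλ/3` it is `σ²` that
stays bounded below, so `u = ε_k/(2σ²) → 0`.
-/

section CubicRoots

variable {α lam : ℝ} {s ε : ℕ → ℝ}

lemma tendsto_zero_of_root_of_lower_bound (hα : 0 < α) {b : ℝ} (hb : -α * lam < b)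
    (hε : Tendsto ε atTop (𝓝 0)) (hs : ∀ᶠ k in atTop, b < s k)
    (hroot : ∀ᶠ k in atTop, 2 * s k ^ 2 * (s k / α + lam) = ε k) :
    Tendsto s atTop (𝓝 0) := by
  have hu : 0 < b / α + lam := by
    have : -lam < b / α := by rw [lt_div_iff₀ hα]; linarith
    linarith
  have hsq : Tendsto (fun k => s k ^ 2) atTop (𝓝 0) := by
    refine squeeze_zero' (Eventually.of_forall fun k => sq_nonneg (s k)) ?_
      (by simpa using hε.div_const (2 * (b / α + lam)))
    filter_upwards [hs, hroot] with k hsk hk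
    rw [le_div_iff₀ (by positivity), ← hk]
    have : b / α ≤ s k / α := div_le_div_of_nonneg_right hsk.le hα.le
    nlinarith [sq_nonneg (s k)]
  rw [tendsto_zero_iff_abs_tendsto_zero]
  simpa only [Function.comp_def, Real.sqrt_sq_eq_abs, Real.sqrt_zero] using hsq.sqrt

lemma tendsto_abs_natCast_mul_of_root {c : ℝ} (hlam : 0 < lam) (hs : Tendsto s atTop (𝓝 0))
    (hroot : ∀ᶠ k in atTop, 2 * s k ^ 2 * (s k / α + lam) = c / (k : ℝ) ^ 2) :
    Tendsto (fun k : ℕ => |k * s k|) atTop (𝓝 (√(c / (2 * lam)))) := by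
  have hu : Tendsto (fun k => 2 * (s k / α + lam)) atTop (𝓝 (2 * lam)) := by
    simpa using ((hs.div_const α).add_const lam).const_mul 2
  have hsq : Tendsto (fun k : ℕ => (k * s k) ^ 2) atTop (𝓝 (c / (2 * lam))) := by
    refine (tendsto_const_nhds.div hu (by positivity)).congr' ?_
    filter_upwards [hroot, hu.eventually (lt_mem_nhds (by positivity : (0 : ℝ) < 2 * lam)),
      eventually_ge_atTop 1] with k hk hpos hk1
    have : (k : ℝ) ≠ 0 := by positivity
    show c / _ = _
    rw [div_eq_iff hpos.ne', show (k * s k) ^ 2 * (2 * (s k / α + lam))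
      = k ^ 2 * (2 * s k ^ 2 * (s k / α + lam)) by ring, hk]
    field_simp
  simpa [Real.sqrt_sq_eq_abs] using hsq.sqrt

lemma tendsto_of_root_of_upper_bound (hα : α ≠ 0) {b : ℝ} (hb : b < 0)
    (hε : Tendsto ε atTop (𝓝 0)) (hs : ∀ᶠ k in atTop, s k ≤ b)
    (hroot : ∀ᶠ k in atTop, 2 * s k ^ 2 * (s k / α + lam) = ε k) :
    Tendsto s atTop (𝓝 (-α * lam)) := by
  have hu : Tendsto (fun k => s k / α + lam) atTop (𝓝 0) := by
    refine squeeze_zero_norm' ?_ (by simpa using hε.abs.div_const (2 * b ^ 2))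
    filter_upwards [hs, hroot] with k hsk hk
    have hb2 : b ^ 2 ≤ s k ^ 2 := by nlinarith
    rw [Real.norm_eq_abs, le_div_iff₀ (by nlinarith), ← hk, abs_mul, abs_mul, abs_two,
      abs_of_nonneg (sq_nonneg (s k))]
    nlinarith [abs_nonneg (s k / α + lam)]
  have : Tendsto (fun k => α * (s k / α + lam) - α * lam) atTop (𝓝 (-α * lam)) := by
    simpa using (hu.const_mul α).sub_const (α * lam)
  refine this.congr fun k => ?_
  field_simp
  ring

end CubicRoots

theorem stmt_19_general (n : ℕ) (α lam : ℝ) (hα : 0 < α) (hlam : 0 < lam)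
    (f₀ : EuclideanSpace ℝ (Fin n))
    (σ₁ σ₂ σ₃ : ℕ → ℝ)
    (hord : ∀ k : ℕ, 1 ≤ k →
      σ₁ k > 0 ∧ 0 > σ₂ k ∧ σ₂ k > -2 * α * lam / 3 ∧
      -2 * α * lam / 3 > σ₃ k ∧ σ₃ k > -α * lam)
    (hroot : ∀ k : ℕ, 1 ≤ k →
      2 * (σ₁ k) ^ 2 * (σ₁ k / α + lam) = ‖f₀‖ ^ 2 / (k : ℝ) ^ 2 ∧
      2 * (σ₂ k) ^ 2 * (σ₂ k / α + lam) = ‖f₀‖ ^ 2 / (k : ℝ) ^ 2 ∧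
      2 * (σ₃ k) ^ 2 * (σ₃ k / α + lam) = ‖f₀‖ ^ 2 / (k : ℝ) ^ 2) :
    Tendsto σ₁ atTop (nhds 0) ∧
    Tendsto σ₂ atTop (nhds 0) ∧
    Tendsto σ₃ atTop (nhds (-α * lam)) ∧
    Tendsto (fun k : ℕ => (k : ℝ) * σ₁ k) atTop (nhds (‖f₀‖ / Real.sqrt (2 * lam))) ∧
    Tendsto (fun k : ℕ => (k : ℝ) * σ₂ k) atTop (nhds (-‖f₀‖ / Real.sqrt (2 * lam))) := by
  have hord' := (eventually_ge_atTop 1).mono hord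
  have hroot' := (eventually_ge_atTop 1).mono hroot
  have hε : Tendsto (fun k : ℕ => ‖f₀‖ ^ 2 / (k : ℝ) ^ 2) atTop (𝓝 0) := by
    have := (tendsto_const_div_atTop_nhds_zero_nat (‖f₀‖ ^ 2)).mul
      (tendsto_inv_atTop_nhds_zero_nat (𝕜 := ℝ))
    rw [mul_zero] at this
    exact this.congr fun k => by ring
  have hlim : √(‖f₀‖ ^ 2 / (2 * lam)) = ‖f₀‖ / √(2 * lam) := by
    rw [Real.sqrt_div (sq_nonneg _), Real.sqrt_sq (norm_nonneg _)]
  have hb : -α * lam < -2 * α * lam / 3 := by nlinarith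
  have h₁ : Tendsto σ₁ atTop (𝓝 0) :=
    tendsto_zero_of_root_of_lower_bound hα hb hε
      (hord'.mono fun k h => by linarith [h.1]) (hroot'.mono fun k h => h.1)
  have h₂ : Tendsto σ₂ atTop (𝓝 0) :=
    tendsto_zero_of_root_of_lower_bound hα hb hε
      (hord'.mono fun k h => h.2.2.1) (hroot'.mono fun k h => h.2.1)
  have h₃ : Tendsto σ₃ atTop (𝓝 (-α * lam)) :=
    tendsto_of_root_of_upper_bound hα.ne' (by nlinarith) hε
      (hord'.mono fun k h => h.2.2.2.1.le) (hroot'.mono fun k h => h.2.2)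
  refine ⟨h₁, h₂, h₃, ?_, ?_⟩
  · rw [← hlim]
    refine (tendsto_abs_natCast_mul_of_root hlam h₁ (hroot'.mono fun k h => h.1)).congr' ?_
    filter_upwards [hord', eventually_ge_atTop 1] with k h hk
    exact abs_of_pos (mul_pos (by positivity) h.1)
  · rw [neg_div, ← hlim]
    refine (tendsto_abs_natCast_mul_of_root hlam h₂ (hroot'.mono fun k h => h.2.1)).neg.congr' ?_
    filter_upwards [hord', eventually_ge_atTop 1] with k h hk
    rw [abs_of_neg (mul_neg_of_pos_of_neg (by positivity) h.2.1), neg_neg]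

/-- Root limits under scaling: with the ordered roots
`σ_{1,k} > 0 > σ_{2,k} > −2αλ/3 > σ_{3,k} > −αλ` of
`2σ²(σ/α + λ) = ‖f₀‖²/k²`, one has `σ_{1,k} → 0`, `σ_{2,k} → 0`,
`σ_{3,k} → −αλ`, `k σ_{1,k} → ‖f₀‖/√(2λ)` and `k σ_{2,k} → −‖f₀‖/√(2λ)`. -/
theorem stmt_19 (n : ℕ) (α lam : ℝ) (hα : 0 < α) (hlam : 0 < lam)
    (f₀ : EuclideanSpace ℝ (Fin n))
    (hf₀ : 0 < ‖f₀‖ ^ 2) (hf₀' : ‖f₀‖ ^ 2 < 8 * α ^ 2 * lam ^ 3 / 27)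
    (σ₁ σ₂ σ₃ : ℕ → ℝ)
    (hord : ∀ k : ℕ, 1 ≤ k →
      σ₁ k > 0 ∧ 0 > σ₂ k ∧ σ₂ k > -2 * α * lam / 3 ∧
      -2 * α * lam / 3 > σ₃ k ∧ σ₃ k > -α * lam)
    (hroot : ∀ k : ℕ, 1 ≤ k →
      2 * (σ₁ k) ^ 2 * (σ₁ k / α + lam) = ‖f₀‖ ^ 2 / (k : ℝ) ^ 2 ∧
      2 * (σ₂ k) ^ 2 * (σ₂ k / α + lam) = ‖f₀‖ ^ 2 / (k : ℝ) ^ 2 ∧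
      2 * (σ₃ k) ^ 2 * (σ₃ k / α + lam) = ‖f₀‖ ^ 2 / (k : ℝ) ^ 2) :
    Tendsto σ₁ atTop (nhds 0) ∧
    Tendsto σ₂ atTop (nhds 0) ∧
    Tendsto σ₃ atTop (nhds (-α * lam)) ∧
    Tendsto (fun k : ℕ => (k : ℝ) * σ₁ k) atTop (nhds (‖f₀‖ / Real.sqrt (2 * lam))) ∧
    Tendsto (fun k : ℕ => (k : ℝ) * σ₂ k) atTop (nhds (-‖f₀‖ / Real.sqrt (2 * lam))) :=
  stmt_19_general n α lam hα hlam f₀ σ₁ σ₂ σ₃ hord hroot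
end
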